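/- Let p, q and p′, q′ be two pairs of relatively prime positive integers with (p,q) ≠ (p′,q′). Then the subshift generated by S(0,q/p) is not conjugate to the subshift generated by S(0,q′/p′), and likewise the subshift generated by S′(0,q/p) is not conjugate to the subshift generated by S′(0,q′/p′). -/

import Mathlib

open Classical

/-- The shift map `σ` on bi-infinite sequences: `σ(x)_i = x_{i+1}`. -/
def shiftMap {A : Type*} (x : ℤ → A) : ℤ → A := fun i => x (i + 1)

/-- The iterated shift `σ^k` for `k ∈ ℤ`: `σ^k(x)_i = x_{i+k}`. -/
def shiftZ {A : Type*} (k : ℤ) (x : ℤ → A) : ℤ → A := fun i => x (i + k)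

/-- `x` is periodic with period `N > 0`, i.e. `σ^N(x) = x`. -/
def IsPeriodicWith {A : Type*} (x : ℤ → A) (N : ℕ) : Prop :=
  0 < N ∧ ∀ i : ℤ, x (i + N) = x i

/-- `x` is periodic (with some period `N > 0`). -/
def IsPeriodicSeq {A : Type*} (x : ℤ → A) : Prop := ∃ N : ℕ, IsPeriodicWith x N

/-- The sequence `p(x;i,n)` obtained from `x` by removing the block `x_{i+1} ⋯ x_{i+n}`. -/
def removeBlock {A : Type*} (x : ℤ → A) (i : ℤ) (n : ℕ) : ℤ → A :=
  fun k => if k ≤ i then x k else x (k + n)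

/-- `(i,n)` is an anomaly occurrence of `x`: `n > 0` and `p(x;i,n)` is periodic. -/
def IsAnomalyOcc {A : Type*} (x : ℤ → A) (i : ℤ) (n : ℕ) : Prop :=
  0 < n ∧ IsPeriodicSeq (removeBlock x i n)

/-- `x` is eventually periodic: non-periodic, but removing some block leaves a periodic sequence. -/
def EventuallyPeriodic {A : Type*} (x : ℤ → A) : Prop :=
  ¬ IsPeriodicSeq x ∧ ∃ (i : ℤ) (n : ℕ), IsAnomalyOcc x i n

/-- The least period of an eventually periodic sequence `x`: the least period of
`p(x;i,n)` over anomaly occurrences `(i,n)` of `x`. -/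
noncomputable def evLeastPeriod {A : Type*} (x : ℤ → A) : ℕ :=
  sInf {N : ℕ | ∃ (i : ℤ) (n : ℕ), IsAnomalyOcc x i n ∧ IsPeriodicWith (removeBlock x i n) N}

/-- The anomaly size `a(x)`: the minimum of `n` over anomaly occurrences `(i,n)` of `x`. -/
noncomputable def anomalySize {A : Type*} (x : ℤ → A) : ℕ :=
  sInf {n : ℕ | ∃ i : ℤ, IsAnomalyOcc x i n}

/-- The orbit `{σ^k(x) : k ∈ ℤ}` of a bi-infinite sequence. -/
def seqOrbit {A : Type*} (x : ℤ → A) : Set (ℤ → A) := {y | ∃ k : ℤ, y = shiftZ k x}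

/-- The subshift generated by `x`: the closure of its orbit in the product topology. -/
def subshiftGen {A : Type*} [TopologicalSpace A] (x : ℤ → A) : Set (ℤ → A) :=
  closure (seqOrbit x)

/-- Two subshifts are conjugate if there is a homeomorphism between them commuting
with the shift. -/
def Conjugate {A B : Type*} [TopologicalSpace A] [TopologicalSpace B]
    (X : Set (ℤ → A)) (Y : Set (ℤ → B)) : Prop :=
  ∃ φ : X ≃ₜ Y, ∀ (u : ℤ → A) (hu : u ∈ X) (hu' : shiftMap u ∈ X),
    ((φ ⟨shiftMap u, hu'⟩ : Y) : ℤ → B) = shiftMap ((φ ⟨u, hu⟩ : Y) : ℤ → B)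

/-- The relation generating the suspension: `(x,s) ∼ (σ^n(x), s - n)`. -/
def SuspRel {A : Type*} (X : Set (ℤ → A)) : (X × ℝ) → (X × ℝ) → Prop :=
  fun p q => ∃ n : ℤ, (q.1 : ℤ → A) = shiftZ n (p.1 : ℤ → A) ∧ q.2 = p.2 - n

/-- The suspension `ΣX` of a subshift `X`. -/
def Susp {A : Type*} [TopologicalSpace A] (X : Set (ℤ → A)) : Type _ :=
  Quot (SuspRel X)

instance {A : Type*} [TopologicalSpace A] (X : Set (ℤ → A)) : TopologicalSpace (Susp X) :=
  instTopologicalSpaceQuot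

/-- The suspension flow `φ_t [x,s] = [x, s+t]`. -/
def suspFlow {A : Type*} [TopologicalSpace A] (X : Set (ℤ → A)) (t : ℝ) :
    Susp X → Susp X :=
  Quot.lift (fun p => Quot.mk _ (p.1, p.2 + t)) (by
    rintro p r ⟨n, h1, h2⟩
    exact Quot.sound ⟨n, h1, by rw [h2]; ring⟩)

/-- Two subshifts are flow equivalent if there is a homeomorphism of their suspensions
taking flow lines to flow lines in an orientation-preserving way. -/
def FlowEquiv {A B : Type*} [TopologicalSpace A] [TopologicalSpace B]
    (X : Set (ℤ → A)) (Y : Set (ℤ → B)) : Prop :=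
  ∃ h : Susp X ≃ₜ Susp Y, ∀ u : Susp X, ∃ τ : ℝ → ℝ,
    StrictMono τ ∧ Function.Bijective τ ∧ τ 0 = 0 ∧
      ∀ t : ℝ, h (suspFlow X t u) = suspFlow Y (τ t) (h u)

/-- Cell lengths `z_n` for the type-`S` skew Sturmian sequence `S(0, q/p)`, with `β = p/q`. -/
noncomputable def cellLenS (p q : ℤ) (n : ℤ) : ℕ :=
  if n < 0 then
    ({k : ℤ | (n : ℚ) < (k : ℚ) * ((p : ℚ) / (q : ℚ)) ∧
        (k : ℚ) * ((p : ℚ) / (q : ℚ)) ≤ (n : ℚ) + 1}).ncard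
  else if n = 0 then
    ({k : ℤ | 0 < (k : ℚ) * ((p : ℚ) / (q : ℚ)) ∧
        (k : ℚ) * ((p : ℚ) / (q : ℚ)) < 1}).ncard
  else
    ({k : ℤ | (n : ℚ) ≤ (k : ℚ) * ((p : ℚ) / (q : ℚ)) ∧
        (k : ℚ) * ((p : ℚ) / (q : ℚ)) < (n : ℚ) + 1}).ncard

/-- Cell lengths `z′_n` for the type-`S′` skew Sturmian sequence `S′(0, q/p)`, with `β = p/q`. -/
noncomputable def cellLenS' (p q : ℤ) (n : ℤ) : ℕ :=
  if n < 0 then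
    ({k : ℤ | (n : ℚ) ≤ (k : ℚ) * ((p : ℚ) / (q : ℚ)) ∧
        (k : ℚ) * ((p : ℚ) / (q : ℚ)) < (n : ℚ) + 1}).ncard
  else if n = 0 then
    ({k : ℤ | 0 ≤ (k : ℚ) * ((p : ℚ) / (q : ℚ)) ∧
        (k : ℚ) * ((p : ℚ) / (q : ℚ)) ≤ 1}).ncard
  else
    ({k : ℤ | (n : ℚ) < (k : ℚ) * ((p : ℚ) / (q : ℚ)) ∧
        (k : ℚ) * ((p : ℚ) / (q : ℚ)) ≤ (n : ℚ) + 1}).ncard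

/-- The position `L_n` of the leading `1` of the cell `B_n`. -/
noncomputable def cellStart (z : ℤ → ℕ) (n : ℤ) : ℤ :=
  if 0 ≤ n then n + ∑ j ∈ Finset.Ico (0 : ℤ) n, (z j : ℤ)
  else n - ∑ j ∈ Finset.Ico n (0 : ℤ), (z j : ℤ)

/-- The `{0,1}`-sequence determined by cell lengths `z`: a `1` at each position `L_n`
and `0` elsewhere. -/
noncomputable def seqOfCells (z : ℤ → ℕ) : ℤ → Fin 2 :=
  fun i => if ∃ n : ℤ, i = cellStart z n then 1 else 0

/-- The type-`S` skew Sturmian sequence `S(0, q/p)`. -/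
noncomputable def sturmS (p q : ℤ) : ℤ → Fin 2 := seqOfCells (cellLenS p q)

/-- The type-`S′` skew Sturmian sequence `S′(0, q/p)`. -/
noncomputable def sturmS' (p q : ℤ) : ℤ → Fin 2 := seqOfCells (cellLenS' p q)

/-!
The generating sequence `x` of either type agrees, far to the right, with a periodic word
`w` of least period `T = p + q` (a Beatty-type word) and, far to the left, with its shift
`σ^c w`, where `p c ≡ ∓1 (mod p + q)`. Such an `x` generates the subshift
`O(x) ∪ O(w)`: a limit of shifts `σ^k x` is a shift of `x` if the `k` stay bounded,
and a shift of `w` otherwise. A conjugacy `φ` preserves periods, so it maps `x` to a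
shift `σ^k x'` and then, by continuity along `σ^{± n T T'}`, maps `w` to `σ^k w'` and
`σ^c w` to `σ^{k + c'} w'`. Hence `T = T'` and `c ≡ c' (mod T)`, which forces
`p ≡ p' (mod p + q)` and so `(p, q) = (p', q')`.
-/

open Filter Topology Function

section Shift

variable {A : Type*}

lemma shiftZ_shiftZ (a b : ℤ) (x : ℤ → A) : shiftZ a (shiftZ b x) = shiftZ (a + b) x := by
  funext i; simp only [shiftZ, add_assoc]

@[simp] lemma shiftZ_zero (x : ℤ → A) : shiftZ 0 x = x := by
  funext i; simp [shiftZ]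

lemma shiftZ_add_one (k : ℤ) (x : ℤ → A) : shiftZ (k + 1) x = shiftMap (shiftZ k x) := by
  rw [add_comm, ← shiftZ_shiftZ]; rfl

lemma periodic_iff_shiftZ_eq {x : ℤ → A} {s : ℤ} : Periodic x s ↔ shiftZ s x = x :=
  funext_iff.symm

lemma Function.Periodic.eq_of_modEq {x : ℤ → A} {N a b : ℤ} (hx : Periodic x N)
    (h : a ≡ b [ZMOD N]) : x a = x b := by
  obtain ⟨m, hm⟩ := Int.modEq_iff_dvd.1 h
  rw [show b = a + m • N by rw [smul_eq_mul]; linarith, hx.zsmul m a]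

lemma periodic_shiftZ_iff {x : ℤ → A} {k s : ℤ} : Periodic (shiftZ k x) s ↔ Periodic x s := by
  refine ⟨fun h => ?_, fun h => h.add_const k⟩
  intro i
  simpa [shiftZ, sub_add_eq_add_sub] using h (i - k)

variable [TopologicalSpace A]

lemma continuous_shiftZ (k : ℤ) : Continuous (shiftZ k : (ℤ → A) → (ℤ → A)) :=
  continuous_pi fun i => continuous_apply (i + k)

lemma mem_subshiftGen_self (x : ℤ → A) : x ∈ subshiftGen x :=
  subset_closure ⟨0, (shiftZ_zero x).symm⟩

lemma shiftZ_mem_subshiftGen {x u : ℤ → A} (k : ℤ) (hu : u ∈ subshiftGen x) :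
    shiftZ k u ∈ subshiftGen x :=
  map_mem_closure (continuous_shiftZ k) hu fun _ ⟨j, hj⟩ => ⟨k + j, hj ▸ shiftZ_shiftZ k j x⟩

lemma exists_ultrafilter_tendsto_of_mem_subshiftGen {x y : ℤ → A} (hy : y ∈ subshiftGen x) :
    ∃ U : Ultrafilter ℤ, Tendsto (fun k => shiftZ k x) U (𝓝 y) := by
  have horbit : seqOrbit x = Set.range (fun k => shiftZ k x) := by
    ext; simp [seqOrbit, eq_comm]
  rw [subshiftGen, horbit, mem_closure_iff_clusterPt, ← map_top] at hy
  obtain ⟨U, -, hU⟩ := mapClusterPt_iff_ultrafilter.1 hy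
  exact ⟨U, hU⟩

end Shift

section Conjugacy

variable {A B : Type*} [TopologicalSpace A] [TopologicalSpace B]

def CommutesWithShift {X : Set (ℤ → A)} {Y : Set (ℤ → B)} (φ : X ≃ₜ Y) : Prop :=
  ∀ (u : ℤ → A) (hu : u ∈ X) (hu' : shiftMap u ∈ X),
    ((φ ⟨shiftMap u, hu'⟩ : Y) : ℤ → B) = shiftMap ((φ ⟨u, hu⟩ : Y) : ℤ → B)

variable {x : ℤ → A} {Y : Set (ℤ → B)} {φ : subshiftGen x ≃ₜ Y}

lemma CommutesWithShift.apply_shiftZ (hφ : CommutesWithShift φ) (k : ℤ) (u : subshiftGen x) :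
    (φ ⟨shiftZ k u, shiftZ_mem_subshiftGen k u.2⟩ : ℤ → B) = shiftZ k (φ u) := by
  induction k using Int.induction_on generalizing u with
  | zero => simp
  | succ k ih =>
    simp only [shiftZ_add_one, ← ih]
    exact hφ _ _ _
  | pred k ih =>
    set v : subshiftGen x := ⟨shiftZ (-k - 1) u, shiftZ_mem_subshiftGen _ u.2⟩
    have h := hφ v v.2 (shiftZ_mem_subshiftGen 1 v.2)
    have hv : shiftMap (v : ℤ → A) = shiftZ (-k) u := by
      rw [← shiftZ_add_one, sub_add_cancel]
    simp only [hv, ih] at h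
    have h' : shiftZ (-k) (φ u : ℤ → B) = shiftZ 1 (φ v) := h
    change (φ v : ℤ → B) = _
    rw [show (-k - 1 : ℤ) = -1 + -k by ring, ← shiftZ_shiftZ, h', shiftZ_shiftZ, neg_add_cancel,
      shiftZ_zero]

lemma CommutesWithShift.periodic_iff (hφ : CommutesWithShift φ) (u : subshiftGen x) (s : ℤ) :
    Periodic (φ u : ℤ → B) s ↔ Periodic (u : ℤ → A) s := by
  rw [periodic_iff_shiftZ_eq, periodic_iff_shiftZ_eq, ← hφ.apply_shiftZ, Subtype.coe_inj,
    φ.injective.eq_iff, Subtype.ext_iff]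

lemma CommutesWithShift.apply_eq_of_tendsto [T2Space B] (hφ : CommutesWithShift φ) {ι : Type*}
    {l : Filter ι} [l.NeBot] {m : ι → ℤ} {u : ℤ → A} (hu : u ∈ subshiftGen x) {v : ℤ → B}
    (hx : Tendsto (fun n => shiftZ (m n) x) l (𝓝 u))
    (hy : Tendsto (fun n => shiftZ (m n) (φ ⟨x, mem_subshiftGen_self x⟩ : ℤ → B)) l (𝓝 v)) :
    (φ ⟨u, hu⟩ : ℤ → B) = v := by
  have hx' : Tendsto (fun n => (⟨shiftZ (m n) x,
      shiftZ_mem_subshiftGen _ (mem_subshiftGen_self x)⟩ : subshiftGen x)) l (𝓝 ⟨u, hu⟩) :=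
    tendsto_subtype_rng.2 hx
  refine tendsto_nhds_unique
    ((continuous_subtype_val.comp φ.continuous).continuousAt.tendsto.comp hx') ?_
  exact hy.congr fun n => (hφ.apply_shiftZ (m n) ⟨x, mem_subshiftGen_self x⟩).symm

end Conjugacy

structure HasPeriodicTails {A : Type*} (x w : ℤ → A) (T c : ℤ) : Prop where
  pos : 0 < T
  periodic_iff : ∀ s, Periodic w s ↔ T ∣ s
  eventually_atTop : ∀ᶠ i in atTop, x i = w i
  eventually_atBot : ∀ᶠ i in atBot, x i = w (i + c)
  not_dvd : ¬ T ∣ c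

lemma tendsto_mul_natCast_atTop {T : ℤ} (hT : 0 < T) :
    Tendsto (fun n : ℕ => T * n) atTop atTop :=
  tendsto_natCast_atTop_atTop.const_mul_atTop' hT

lemma tendsto_shiftZ_of_eventually_eq {A : Type*} [TopologicalSpace A] {ι : Type*}
    {l : Filter ι} {m : ι → ℤ} {x v : ℤ → A} {T r : ℤ} (hv : Periodic v T)
    (hxv : ∀ i, ∀ᶠ n in l, x (i + m n) = v (i + m n)) (hr : ∀ᶠ n in l, m n ≡ r [ZMOD T]) :
    Tendsto (fun n => shiftZ (m n) x) l (𝓝 (shiftZ r v)) := by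
  refine tendsto_pi_nhds.2 fun i => tendsto_const_nhds.congr' ?_
  filter_upwards [hxv i, hr] with n hn hnr
  rw [shiftZ, shiftZ, hn]
  exact hv.eq_of_modEq (hnr.add_left i).symm

namespace HasPeriodicTails

section

variable {A : Type*} {x w : ℤ → A} {T c : ℤ} (D : HasPeriodicTails x w T c)
include D

lemma periodic : Periodic w T := (D.periodic_iff T).2 dvd_rfl

lemma not_periodic {N : ℤ} (hN : 0 < N) : ¬ Periodic x N := by
  intro hx
  have hm := tendsto_mul_natCast_atTop (mul_pos D.pos hN)
  have hm' : Tendsto (fun n : ℕ => -(T * N * n)) atTop atBot := tendsto_neg_atTop_atBot.comp hm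
  have hT (n : ℕ) : T ∣ T * N * n := Dvd.intro (N * n) (by ring)
  have hN (n : ℕ) : N ∣ T * N * n := Dvd.intro_left (T * n) (by ring)
  have hright (i : ℤ) : x i = w i := by
    obtain ⟨n, hn⟩ := ((tendsto_atTop_add_const_left _ i hm).eventually D.eventually_atTop).exists
    rwa [hx.eq_of_modEq (Int.add_modEq_left_iff.2 (hN n)),
      D.periodic.eq_of_modEq (Int.add_modEq_left_iff.2 (hT n))] at hn
  have hleft (i : ℤ) : x i = w (i + c) := by
    obtain ⟨n, hn⟩ := ((tendsto_atBot_add_const_left _ i hm').eventually D.eventually_atBot).exists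
    rwa [hx.eq_of_modEq (Int.add_modEq_left_iff.2 (dvd_neg.2 (hN n))),
      (D.periodic.add_const c).eq_of_modEq (Int.add_modEq_left_iff.2 (dvd_neg.2 (hT n)))] at hn
  exact D.not_dvd ((D.periodic_iff c).1 fun i => by rw [← hleft, hright])

variable [TopologicalSpace A] {ι : Type*} {l : Filter ι} {m : ι → ℤ}

lemma tendsto_atTop (hm : Tendsto m l atTop) {r : ℤ} (hr : ∀ᶠ n in l, m n ≡ r [ZMOD T]) :
    Tendsto (fun n => shiftZ (m n) x) l (𝓝 (shiftZ r w)) :=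
  tendsto_shiftZ_of_eventually_eq D.periodic
    (fun i => (tendsto_atTop_add_const_left _ i hm).eventually D.eventually_atTop) hr

lemma tendsto_atBot (hm : Tendsto m l atBot) {r : ℤ} (hr : ∀ᶠ n in l, m n ≡ r [ZMOD T]) :
    Tendsto (fun n => shiftZ (m n) x) l (𝓝 (shiftZ (r + c) w)) := by
  rw [← shiftZ_shiftZ]
  exact tendsto_shiftZ_of_eventually_eq (D.periodic.add_const c)
    (fun i => (tendsto_atBot_add_const_left _ i hm).eventually D.eventually_atBot) hr

lemma shiftZ_mem_subshiftGen (r : ℤ) : shiftZ r w ∈ subshiftGen x :=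
  mem_closure_of_tendsto
    (D.tendsto_atTop (tendsto_atTop_add_const_left _ r (tendsto_mul_natCast_atTop D.pos))
      (.of_forall fun _ => Int.modEq_add_fac_self))
    (.of_forall fun _ => ⟨_, rfl⟩)

lemma w_mem_subshiftGen : w ∈ subshiftGen x := by
  simpa using D.shiftZ_mem_subshiftGen 0

lemma eq_shiftZ_of_mem_subshiftGen [T2Space A] {y : ℤ → A} (hy : y ∈ subshiftGen x) :
    (∃ k, y = shiftZ k x) ∨ ∃ r, y = shiftZ r w := by
  obtain ⟨U, hU⟩ := exists_ultrafilter_tendsto_of_mem_subshiftGen hy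
  rcases U.le_cofinite_or_eq_pure with hcof | ⟨k, rfl⟩
  · -- a non-principal `U` lives near `+∞` or `-∞`, and inside one residue class mod `T`
    obtain ⟨r, -, hr⟩ := (U.map (· % T)).eq_pure_of_finite_mem (Set.finite_Ico 0 T)
      (.of_forall fun k => ⟨Int.emod_nonneg k D.pos.ne', Int.emod_lt_of_pos k D.pos⟩ :
        ∀ᶠ k in U, k % T ∈ Set.Ico 0 T)
    have hres : ∀ᶠ k in U, k ≡ r [ZMOD T] := by
      have : {r} ∈ U.map (· % T) := hr ▸ Ultrafilter.mem_pure.2 rfl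
      filter_upwards [Ultrafilter.mem_map.1 this] with k hk
      exact hk ▸ (Int.mod_modEq k T).symm
    rw [Int.cofinite_eq, Ultrafilter.le_sup_iff] at hcof
    right
    rcases hcof with hbot | htop
    · exact ⟨r + c, tendsto_nhds_unique hU (D.tendsto_atBot (tendsto_id.mono_left hbot) hres)⟩
    · exact ⟨r, tendsto_nhds_unique hU (D.tendsto_atTop (tendsto_id.mono_left htop) hres)⟩
  · exact Or.inl ⟨k, tendsto_nhds_unique hU (tendsto_pure_nhds _ k)⟩

end

variable {A B : Type*} [TopologicalSpace A] [TopologicalSpace B] [T2Space B]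
  {x w : ℤ → A} {T c : ℤ} {x' w' : ℤ → B} {T' c' : ℤ}
  {φ : subshiftGen x ≃ₜ subshiftGen x'}

lemma apply_tails_of_apply_eq_shiftZ (D : HasPeriodicTails x w T c)
    (D' : HasPeriodicTails x' w' T' c') (hφ : CommutesWithShift φ) {k : ℤ}
    (hk : (φ ⟨x, mem_subshiftGen_self x⟩ : ℤ → B) = shiftZ k x') :
    (φ ⟨w, D.w_mem_subshiftGen⟩ : ℤ → B) = shiftZ k w' ∧
      (φ ⟨shiftZ c w, D.shiftZ_mem_subshiftGen c⟩ : ℤ → B) = shiftZ (k + c') w' := by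
  -- both tails are followed along the common period `T * T'`
  have hm := tendsto_mul_natCast_atTop (mul_pos D.pos D'.pos)
  have hm' : Tendsto (fun n : ℕ => -(T * T' * n)) atTop atBot := tendsto_neg_atTop_atBot.comp hm
  have hT (n : ℕ) : T ∣ T * T' * n := Dvd.intro (T' * n) (by ring)
  have hT' (n : ℕ) : T' ∣ T * T' * n := Dvd.intro_left (T * n) (by ring)
  constructor
  · refine hφ.apply_eq_of_tendsto _ (l := atTop) (m := fun n : ℕ => T * T' * n) ?_ ?_
    · simpa using D.tendsto_atTop hm (.of_forall fun n => (hT n).modEq_zero_int)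
    · simpa only [hk, shiftZ_shiftZ] using D'.tendsto_atTop (tendsto_atTop_add_const_right _ k hm)
        (.of_forall fun n => Int.add_modEq_right_iff.2 (hT' n))
  · refine hφ.apply_eq_of_tendsto _ (l := atTop) (m := fun n : ℕ => -(T * T' * n)) ?_ ?_
    · simpa using D.tendsto_atBot hm' (.of_forall fun n => (dvd_neg.2 (hT n)).modEq_zero_int)
    · simpa only [hk, shiftZ_shiftZ] using D'.tendsto_atBot (tendsto_atBot_add_const_right _ k hm')
        (.of_forall fun n => Int.add_modEq_right_iff.2 (dvd_neg.2 (hT' n)))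

theorem conjugate_invariant (D : HasPeriodicTails x w T c) (D' : HasPeriodicTails x' w' T' c')
    (h : Conjugate (subshiftGen x) (subshiftGen x')) : T = T' ∧ c ≡ c' [ZMOD T] := by
  obtain ⟨φ, hφ⟩ : ∃ φ : subshiftGen x ≃ₜ subshiftGen x', CommutesWithShift φ := h
  have hx := mem_subshiftGen_self x
  obtain ⟨k, hk⟩ : ∃ k, (φ ⟨x, hx⟩ : ℤ → B) = shiftZ k x' := by
    refine (D'.eq_shiftZ_of_mem_subshiftGen (φ ⟨x, hx⟩).2).resolve_right fun ⟨r, hr⟩ => ?_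
    refine D.not_periodic D'.pos ((hφ.periodic_iff ⟨x, hx⟩ T').1 ?_)
    rw [hr, periodic_shiftZ_iff]
    exact D'.periodic
  obtain ⟨hw, hcw⟩ := D.apply_tails_of_apply_eq_shiftZ D' hφ hk
  have hperiods (s : ℤ) : T ∣ s ↔ T' ∣ s := by
    rw [← D.periodic_iff, ← D'.periodic_iff, ← hφ.periodic_iff ⟨w, D.w_mem_subshiftGen⟩, hw,
      periodic_shiftZ_iff]
  have hTT' : T = T' :=
    Int.dvd_antisymm D.pos.le D'.pos.le ((hperiods T').2 dvd_rfl) ((hperiods T).1 dvd_rfl)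
  have hshift : shiftZ (k + c') w' = shiftZ c (shiftZ k w') :=
    (hcw.symm.trans (hφ.apply_shiftZ c ⟨w, D.w_mem_subshiftGen⟩)).trans (congrArg (shiftZ c) hw)
  have hperiodic : shiftZ (c - c') w' = w' :=
    calc shiftZ (c - c') w' = shiftZ (-(k + c')) (shiftZ c (shiftZ k w')) := by
          rw [shiftZ_shiftZ, shiftZ_shiftZ]; congr 1; ring
      _ = w' := by rw [← hshift, shiftZ_shiftZ, neg_add_cancel, shiftZ_zero]
  exact ⟨hTT', (Int.modEq_iff_dvd.2 (hTT' ▸ (D'.periodic_iff _).1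
    (periodic_iff_shiftZ_eq.2 hperiodic))).symm⟩

end HasPeriodicTails

lemma Int.dvd_of_forall_emod_lt_iff {T p a : ℤ} (hp : 0 < p) (hpT : p < T)
    (h : ∀ r, (r + a) % T < p ↔ r % T < p) : T ∣ a := by
  have hT : 0 < T := hp.trans hpT
  have h0 : a % T < p := by simpa using (h 0).2 (by simpa using hp)
  have h1 : ¬ (a - 1) % T < p := by
    rw [sub_eq_neg_add, h, show (-1 : ℤ) = T - 1 + T * (-1) by ring, Int.add_mul_emod_self_left,
      Int.emod_eq_of_lt (by omega) (by omega)]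
    omega
  refine Int.dvd_of_emod_eq_zero (by_contra fun ha => h1 ?_)
  have hpos : 0 < a % T := lt_of_le_of_ne (Int.emod_nonneg a hT.ne') (Ne.symm ha)
  rw [show a - 1 = a % T - 1 + T * (a / T) by linarith [Int.emod_add_mul_ediv a T],
    Int.add_mul_emod_self_left,
    Int.emod_eq_of_lt (by omega) (by linarith [Int.emod_lt_of_pos a hT])]
  linarith

section Beatty

variable {p q : ℤ}

def beattyPos (p q t n : ℤ) : ℤ := n + (n * q + t) / p

def beattyWord (p q θ : ℤ) : ℤ → Fin 2 := fun i => if (θ - p * i) % (p + q) < p then 1 else 0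

lemma exists_beattyPos_eq_iff (hp : 0 < p) (hq : 0 ≤ q) (t i : ℤ) :
    (∃ n, i = beattyPos p q t n) ↔ (t - p * i) % (p + q) < p := by
  constructor
  · rintro ⟨n, rfl⟩
    have h := Int.emod_add_mul_ediv (n * q + t) p
    have h0 := Int.emod_nonneg (n * q + t) hp.ne'
    have h1 := Int.emod_lt_of_pos (n * q + t) hp
    have : t - p * beattyPos p q t n = (n * q + t) % p + (p + q) * (-n) := by
      unfold beattyPos; linarith
    rwa [this, Int.add_mul_emod_self_left, Int.emod_eq_of_lt h0 (by linarith)]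
  · intro h
    have h0 := Int.emod_nonneg (t - p * i) (show p + q ≠ 0 by omega)
    have hdiv := Int.emod_add_mul_ediv (t - p * i) (p + q)
    refine ⟨-((t - p * i) / (p + q)), ?_⟩
    unfold beattyPos
    rw [show -((t - p * i) / (p + q)) * q + t
        = (t - p * i) % (p + q) + p * (i + (t - p * i) / (p + q)) by linarith,
      Int.add_mul_ediv_left _ _ hp.ne', Int.ediv_eq_zero_of_lt h0 h]
    ring

lemma beattyPos_lt_one_iff (hp : 0 < p) {t : ℤ} (ht : t ≤ 0) (htq : -q ≤ t) (n : ℤ) :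
    beattyPos p q t n < 1 ↔ n ≤ 0 := by
  unfold beattyPos
  constructor
  · intro h
    by_contra hn
    have : 0 ≤ (n * q + t) / p := Int.ediv_nonneg (by nlinarith) hp.le
    omega
  · intro hn
    have : (n * q + t) / p ≤ 0 := Int.ediv_nonpos_of_nonpos_of_neg (by nlinarith) hp
    omega

lemma beattyWord_eq_one_iff (θ i : ℤ) : beattyWord p q θ i = 1 ↔ (θ - p * i) % (p + q) < p := by
  unfold beattyWord; split_ifs with h <;> simp [h]

lemma beattyWord_add {θ θ' c : ℤ} (h : θ' ≡ θ - p * c [ZMOD p + q]) (i : ℤ) :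
    beattyWord p q θ (i + c) = beattyWord p q θ' i := by
  unfold beattyWord
  rw [show θ - p * (i + c) = θ - p * c - p * i by ring, (h.sub_right (p * i)).eq]

lemma dvd_of_periodic_beattyWord (hp : 0 < p) (hq : 0 < q) (hco : IsCoprime p q) {θ s : ℤ}
    (h : Periodic (beattyWord p q θ) s) : p + q ∣ s := by
  -- shifting by `s` translates the residues `θ - p i` by `-p s`; as `p` is a unit mod `p + q`
  -- every residue occurs, so the block `[0, p)` of residues is invariant under this translation
  have hcop : IsCoprime p (p + q) := by simpa using hco.mul_add_left_right 1
  obtain ⟨u, v, huv⟩ := id hcop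
  refine hcop.symm.dvd_of_dvd_mul_left (dvd_neg.1 ?_)
  refine Int.dvd_of_forall_emod_lt_iff hp (by omega) fun r => ?_
  have hi : θ - p * (u * (θ - r)) ≡ r [ZMOD p + q] :=
    Int.modEq_iff_dvd.2 ⟨(r - θ) * v, by linear_combination (θ - r) * huv⟩
  have hi' : θ - p * s - p * (u * (θ - r)) ≡ r + -(p * s) [ZMOD p + q] := by
    convert hi.add_right (-(p * s)) using 1; ring
  rw [← hi'.eq, ← hi.eq, ← beattyWord_eq_one_iff, ← beattyWord_eq_one_iff,
    ← beattyWord_add Int.ModEq.rfl, h]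

lemma periodic_beattyWord_iff (hp : 0 < p) (hq : 0 < q) (hco : IsCoprime p q) (θ s : ℤ) :
    Periodic (beattyWord p q θ) s ↔ p + q ∣ s := by
  refine ⟨dvd_of_periodic_beattyWord hp hq hco, fun ⟨m, hm⟩ i => beattyWord_add ?_ i⟩
  rw [hm, Int.ModEq, show θ - p * ((p + q) * m) = θ + (p + q) * (-(p * m)) by ring,
    Int.add_mul_emod_self_left]

end Beatty

lemma cellStart_eq_of_cellLen {z : ℤ → ℕ} {f : ℤ → ℤ} (h0 : f 0 = 0)
    (hz : ∀ n, (z n : ℤ) = f (n + 1) - f n - 1) : cellStart z = f := by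
  have hsum (a b : ℤ) (hab : a ≤ b) : ∑ j ∈ Finset.Ico a b, (z j : ℤ) = f b - f a - (b - a) := by
    induction b, hab using Int.leInduction with
    | base => simp
    | succ b hab ih => rw [← Finset.sum_Ico_add_eq_sum_Ico_add_one hab, ih, hz]; ring
  funext n
  unfold cellStart
  split_ifs with hn
  · rw [hsum 0 n hn, h0]; ring
  · rw [hsum n 0 (by omega), h0]; ring

section SkewSturmian

variable {p q : ℤ}

lemma ncard_eq_ediv_sub_ediv (hp : 0 < p) {a b : ℤ} (hab : a ≤ b) {S : Set ℤ}
    (hS : ∀ k, k ∈ S ↔ a < k * p ∧ k * p ≤ b) : (S.ncard : ℤ) = b / p - a / p := by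
  have : S = ↑(Finset.Ioc (a / p) (b / p)) := by
    ext k
    rw [hS, Finset.coe_Ioc, Set.mem_Ioc, Int.ediv_lt_iff_lt_mul hp, Int.le_ediv_iff_mul_le hp]
  rw [this, Set.ncard_coe_finset, Int.card_Ioc, Int.toNat_of_nonneg]
  linarith [Int.ediv_le_ediv hp hab]

lemma cellStart_cellLenS (hp : 0 < p) (hq : 0 < q) :
    cellStart (cellLenS p q) =
      fun n => if n ≤ 0 then beattyPos p q 0 n else beattyPos p q (-1) n := by
  have hq' : (0 : ℚ) < q := by exact_mod_cast hq
  refine cellStart_eq_of_cellLen ?_ fun n => ?_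
  · simp [beattyPos]
  rcases lt_trichotomy n 0 with hn | rfl | hn
  · rw [cellLenS, if_pos hn, ncard_eq_ediv_sub_ediv hp (a := n * q) (b := (n + 1) * q)
      (by nlinarith) fun k => by
        simp only [Set.mem_ofPred_eq, mul_div_assoc', lt_div_iff₀ hq', div_le_iff₀ hq']
        norm_cast,
      if_pos hn.le, if_pos (by omega : n + 1 ≤ 0)]
    simp only [beattyPos, add_zero]; ring
  · rw [cellLenS, if_neg (lt_irrefl 0), if_pos rfl,
      ncard_eq_ediv_sub_ediv hp (a := 0) (b := q - 1) (by omega) fun k => by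
        simp only [Set.mem_ofPred_eq, mul_div_assoc', lt_div_iff₀ hq', div_lt_iff₀ hq', zero_mul,
          one_mul]
        norm_cast; omega]
    simp [beattyPos, sub_eq_add_neg]
  · rw [cellLenS, if_neg (by omega), if_neg hn.ne',
      ncard_eq_ediv_sub_ediv hp (a := n * q - 1) (b := (n + 1) * q - 1) (by nlinarith) fun k => by
        simp only [Set.mem_ofPred_eq, mul_div_assoc', le_div_iff₀ hq', div_lt_iff₀ hq']
        norm_cast; omega,
      if_neg (by omega : ¬ n ≤ 0), if_neg (by omega : ¬ n + 1 ≤ 0)]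
    simp only [beattyPos]; ring_nf

lemma cellStart_cellLenS' (hp : 0 < p) (hq : 0 < q) :
    cellStart (cellLenS' p q) =
      fun n => (if n ≤ 0 then beattyPos p q (-1) n else beattyPos p q 0 n) + 1 := by
  have hq' : (0 : ℚ) < q := by exact_mod_cast hq
  have hneg : (-1 : ℤ) / p = -1 := by rw [Int.neg_one_ediv, Int.sign_eq_one_of_pos hp]
  refine cellStart_eq_of_cellLen ?_ fun n => ?_
  · simp [beattyPos, hneg]
  rcases lt_trichotomy n 0 with hn | rfl | hn
  · rw [cellLenS', if_pos hn,
      ncard_eq_ediv_sub_ediv hp (a := n * q - 1) (b := (n + 1) * q - 1) (by nlinarith) fun k => by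
        simp only [Set.mem_ofPred_eq, mul_div_assoc', le_div_iff₀ hq', div_lt_iff₀ hq']
        norm_cast; omega,
      if_pos hn.le, if_pos (by omega : n + 1 ≤ 0)]
    simp only [beattyPos]; ring_nf
  · rw [cellLenS', if_neg (lt_irrefl 0), if_pos rfl,
      ncard_eq_ediv_sub_ediv hp (a := -1) (b := q) (by omega) fun k => by
        simp only [Set.mem_ofPred_eq, mul_div_assoc', le_div_iff₀ hq', div_le_iff₀ hq', zero_mul,
          one_mul]
        norm_cast]
    simp [beattyPos, hneg, add_comm]
  · rw [cellLenS', if_neg (by omega), if_neg hn.ne',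
      ncard_eq_ediv_sub_ediv hp (a := n * q) (b := (n + 1) * q) (by nlinarith) fun k => by
        simp only [Set.mem_ofPred_eq, mul_div_assoc', lt_div_iff₀ hq', div_le_iff₀ hq']
        norm_cast,
      if_neg (by omega : ¬ n ≤ 0), if_neg (by omega : ¬ n + 1 ≤ 0)]
    simp only [beattyPos, add_zero]; ring

lemma exists_eq_ite_iff_of_le {f g : ℤ → ℤ} {a i : ℤ} (hf : ∀ n, f n < a ↔ n ≤ 0)
    (hg : ∀ n, g n < a ↔ n ≤ 0) (hi : a ≤ i) :
    (∃ n, i = if n ≤ 0 then f n else g n) ↔ ∃ n, i = g n := by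
  constructor
  · rintro ⟨n, rfl⟩
    split_ifs at hi ⊢ with hn
    · exact absurd ((hf n).2 hn) (not_lt.2 hi)
    · exact ⟨n, rfl⟩
  · rintro ⟨n, rfl⟩
    exact ⟨n, by rw [if_neg fun hn => not_lt.2 hi ((hg n).2 hn)]⟩

lemma exists_eq_ite_iff_of_lt {f g : ℤ → ℤ} {a i : ℤ} (hf : ∀ n, f n < a ↔ n ≤ 0)
    (hg : ∀ n, g n < a ↔ n ≤ 0) (hi : i < a) :
    (∃ n, i = if n ≤ 0 then f n else g n) ↔ ∃ n, i = f n := by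
  constructor
  · rintro ⟨n, rfl⟩
    split_ifs at hi ⊢ with hn
    · exact ⟨n, rfl⟩
    · exact absurd ((hg n).1 hi) hn
  · rintro ⟨n, rfl⟩
    exact ⟨n, by rw [if_pos ((hf n).1 hi)]⟩

variable {tL tR u : ℤ} {z : ℤ → ℕ}

lemma seqOfCells_eq_beattyWord_of_le (hp : 0 < p) (htL : tL ∈ Set.Icc (-q) 0)
    (htR : tR ∈ Set.Icc (-q) 0)
    (hz : cellStart z = fun n => (if n ≤ 0 then beattyPos p q tL n else beattyPos p q tR n) + u)
    {i : ℤ} (hi : 1 + u ≤ i) : seqOfCells z i = beattyWord p q (tR + p * u) i := by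
  have hiff : (∃ n, i = cellStart z n) ↔ (tR + p * u - p * i) % (p + q) < p := by
    simp only [hz, ← sub_eq_iff_eq_add]
    rw [exists_eq_ite_iff_of_le (beattyPos_lt_one_iff hp htL.2 htL.1)
      (beattyPos_lt_one_iff hp htR.2 htR.1) (by omega),
      exists_beattyPos_eq_iff hp (by linarith [htL.1, htL.2])]
    ring_nf
  exact if_congr hiff rfl rfl

lemma seqOfCells_eq_beattyWord_of_lt (hp : 0 < p) (htL : tL ∈ Set.Icc (-q) 0)
    (htR : tR ∈ Set.Icc (-q) 0)
    (hz : cellStart z = fun n => (if n ≤ 0 then beattyPos p q tL n else beattyPos p q tR n) + u)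
    {i : ℤ} (hi : i < 1 + u) : seqOfCells z i = beattyWord p q (tL + p * u) i := by
  have hiff : (∃ n, i = cellStart z n) ↔ (tL + p * u - p * i) % (p + q) < p := by
    simp only [hz, ← sub_eq_iff_eq_add]
    rw [exists_eq_ite_iff_of_lt (beattyPos_lt_one_iff hp htL.2 htL.1)
      (beattyPos_lt_one_iff hp htR.2 htR.1) (by omega),
      exists_beattyPos_eq_iff hp (by linarith [htL.1, htL.2])]
    ring_nf
  exact if_congr hiff rfl rfl

theorem hasPeriodicTails_seqOfCells (hp : 0 < p) (hq : 0 < q) (hco : IsCoprime p q)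
    (htL : tL ∈ Set.Icc (-q) 0) (htR : tR ∈ Set.Icc (-q) 0)
    (hz : cellStart z = fun n => (if n ≤ 0 then beattyPos p q tL n else beattyPos p q tR n) + u)
    {c : ℤ} (hc : p * c ≡ tR - tL [ZMOD p + q]) (hne : ¬ p + q ∣ tR - tL) :
    HasPeriodicTails (seqOfCells z) (beattyWord p q (tR + p * u)) (p + q) c where
  pos := by omega
  periodic_iff := periodic_beattyWord_iff hp hq hco _
  eventually_atTop := eventually_atTop.2
    ⟨1 + u, fun _ hi => seqOfCells_eq_beattyWord_of_le hp htL htR hz hi⟩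
  eventually_atBot := eventually_atBot.2 ⟨u, fun i hi => by
    rw [seqOfCells_eq_beattyWord_of_lt hp htL htR hz (by omega), beattyWord_add]
    convert (hc.sub_left (tR + p * u)).symm using 1
    ring⟩
  not_dvd h := hne (hc.dvd_iff.1 (dvd_mul_of_dvd_right h p))

variable {c : ℤ}

lemma not_add_dvd_one (hp : 0 < p) (hq : 0 < q) : ¬ p + q ∣ 1 :=
  fun h => by linarith [Int.le_of_dvd one_pos h]

theorem hasPeriodicTails_sturmS (hp : 0 < p) (hq : 0 < q) (hco : IsCoprime p q)
    (hc : p * c ≡ -1 [ZMOD p + q]) :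
    HasPeriodicTails (sturmS p q) (beattyWord p q (-1)) (p + q) c := by
  simpa [sturmS] using hasPeriodicTails_seqOfCells (z := cellLenS p q) (tL := 0) (tR := -1)
    (u := 0) hp hq hco ⟨by omega, le_rfl⟩ ⟨by omega, by omega⟩ (by simp [cellStart_cellLenS hp hq])
    (by simpa using hc) (by simpa using not_add_dvd_one hp hq)

theorem hasPeriodicTails_sturmS' (hp : 0 < p) (hq : 0 < q) (hco : IsCoprime p q)
    (hc : p * c ≡ 1 [ZMOD p + q]) :
    HasPeriodicTails (sturmS' p q) (beattyWord p q p) (p + q) c := by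
  simpa [sturmS'] using hasPeriodicTails_seqOfCells (z := cellLenS' p q) (tL := -1) (tR := 0)
    (u := 1) hp hq hco ⟨by omega, by omega⟩ ⟨by omega, le_rfl⟩ (cellStart_cellLenS' hp hq)
    (by simpa using hc) (by simpa using not_add_dvd_one hp hq)

end SkewSturmian

section Arithmetic

variable {p q : ℤ}

lemma IsCoprime.exists_mul_modEq (hco : IsCoprime p q) (ε : ℤ) : ∃ c, p * c ≡ ε [ZMOD p + q] := by
  obtain ⟨u, v, huv⟩ : IsCoprime p (p + q) := by simpa using hco.mul_add_left_right 1
  exact ⟨u * ε, Int.modEq_iff_dvd.2 ⟨ε * v, by linear_combination -ε * huv⟩⟩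

lemma modEq_of_mul_modEq {T p' c c' ε : ℤ} (hε : ε * ε = 1) (hc : p * c ≡ ε [ZMOD T])
    (hc' : p' * c' ≡ ε [ZMOD T]) (hcc' : c ≡ c' [ZMOD T]) : p ≡ p' [ZMOD T] := by
  symm
  calc p' = p' * (ε * ε) := by rw [hε, mul_one]
    _ ≡ p' * (p * c * ε) [ZMOD T] := (hc.symm.mul_right ε).mul_left p'
    _ = p * (p' * c * ε) := by ring
    _ ≡ p * (p' * c' * ε) [ZMOD T] := ((hcc'.mul_left p').mul_right ε).mul_left p
    _ ≡ p * (ε * ε) [ZMOD T] := (hc'.mul_right ε).mul_left p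
    _ = p := by rw [hε, mul_one]

lemma prod_eq_of_modEq {p' q' : ℤ} (hp : 0 < p) (hq : 0 < q) (hp' : 0 < p') (hq' : 0 < q')
    (hT : p + q = p' + q') (h : p ≡ p' [ZMOD p + q]) : (p, q) = (p', q') := by
  obtain rfl : p = p' := by
    have := h.eq
    rwa [Int.emod_eq_of_lt hp.le (by omega), Int.emod_eq_of_lt hp'.le (by omega)] at this
  obtain rfl : q = q' := by omega
  rfl

end Arithmetic

/-- For distinct pairs `(p,q) ≠ (p′,q′)` of coprime positive integers, the
subshifts generated by same-type skew Sturmian sequences of frequencies `q/p` and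
`q′/p′` are not conjugate. -/
theorem stmt_16 (p q p' q' : ℤ) (hp : 0 < p) (hq : 0 < q) (hpq : IsCoprime p q)
    (hp' : 0 < p') (hq' : 0 < q') (hpq' : IsCoprime p' q')
    (hne : (p, q) ≠ (p', q')) :
    ¬ Conjugate (subshiftGen (sturmS p q)) (subshiftGen (sturmS p' q')) ∧
      ¬ Conjugate (subshiftGen (sturmS' p q)) (subshiftGen (sturmS' p' q')) := by
  obtain ⟨c, hc⟩ := hpq.exists_mul_modEq (-1)
  obtain ⟨c', hc'⟩ := hpq'.exists_mul_modEq (-1)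
  refine ⟨fun h => hne ?_, fun h => hne ?_⟩
  · obtain ⟨hT, hcc'⟩ := (hasPeriodicTails_sturmS hp hq hpq hc).conjugate_invariant
      (hasPeriodicTails_sturmS hp' hq' hpq' hc') h
    exact prod_eq_of_modEq hp hq hp' hq' hT (modEq_of_mul_modEq (by norm_num) hc (hT ▸ hc') hcc')
  · have hc₁ : p * -c ≡ 1 [ZMOD p + q] := by simpa using hc.neg
    have hc₁' : p' * -c' ≡ 1 [ZMOD p' + q'] := by simpa using hc'.neg
    obtain ⟨hT, hcc'⟩ := (hasPeriodicTails_sturmS' hp hq hpq hc₁).conjugate_invariant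
      (hasPeriodicTails_sturmS' hp' hq' hpq' hc₁') h
    exact prod_eq_of_modEq hp hq hp' hq' hT (modEq_of_mul_modEq (by norm_num) hc₁ (hT ▸ hc₁') hcc')
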